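/- (Transformation property of the geometric mean) For all symmetric positive definite n×n real matrices A and B and every invertible n×n real matrix M, M (A#B) Mᵀ = (M A Mᵀ) # (M B Mᵀ). -/

import Mathlib

/-!
`A # B` is the unique positive definite solution `X` of the Riccati equation `X A⁻¹ X = B`:
conjugating by `S = A^{1/2}` turns the equation into `Y² = S⁻¹ B S⁻¹` for `Y = S⁻¹ X S⁻¹`, whose
only positive semidefinite solution is `Y = (S⁻¹ B S⁻¹)^{1/2}`. The congruence `X ↦ M X Mᵀ`
preserves positive definiteness and carries solutions for `(A, B)` to solutions for
`(M A Mᵀ, M B Mᵀ)`, so it carries `A # B` to `(M A Mᵀ) # (M B Mᵀ)`.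
-/

open Matrix
open scoped Classical

/-- The unique symmetric positive semidefinite square root of a positive semidefinite
real matrix (junk value `0` for matrices that are not positive semidefinite). -/
noncomputable def msqrt {n : ℕ} (A : Matrix (Fin n) (Fin n) ℝ) :
    Matrix (Fin n) (Fin n) ℝ :=
  if h : A.PosSemidef then
    (h.1.eigenvectorUnitary : Matrix (Fin n) (Fin n) ℝ) *
      diagonal ((↑) ∘ (√·) ∘ h.1.eigenvalues) *
      (star h.1.eigenvectorUnitary : Matrix (Fin n) (Fin n) ℝ)
  else 0

/-- The geometric mean `A # B = A^{1/2} (A^{-1/2} B A^{-1/2})^{1/2} A^{1/2}` of two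
symmetric positive definite matrices `A` and `B` (here `A^{-1/2} = (A^{1/2})⁻¹`). -/
noncomputable def gmean {n : ℕ} (A B : Matrix (Fin n) (Fin n) ℝ) :
    Matrix (Fin n) (Fin n) ℝ :=
  msqrt A * msqrt ((msqrt A)⁻¹ * B * (msqrt A)⁻¹) * msqrt A

namespace Matrix

variable {ι R : Type*} [Fintype ι] [DecidableEq ι] [CommRing R]

lemma conj_mul_inv_conj_mul_conj {M N : Matrix ι ι R} (hM : IsUnit M)
    (hN : IsUnit N) (X A Y : Matrix ι ι R) :
    M * X * N * (M * A * N)⁻¹ * (M * Y * N) = M * (X * A⁻¹ * Y) * N := by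
  have hMd := (isUnit_iff_isUnit_det M).mp hM
  have hNd := (isUnit_iff_isUnit_det N).mp hN
  simp only [mul_inv_rev, Matrix.mul_assoc, mul_nonsing_inv_cancel_left _ _ hNd,
    nonsing_inv_mul_cancel_left _ _ hMd]

lemma mul_nonsing_inv_mul_mul_nonsing_inv_mul {S : Matrix ι ι R} (hS : IsUnit S)
    (X : Matrix ι ι R) : S * (S⁻¹ * X * S⁻¹) * S = X := by
  have hSd := (isUnit_iff_isUnit_det S).mp hS
  simp only [Matrix.mul_assoc, mul_nonsing_inv_cancel_left _ _ hSd, nonsing_inv_mul _ hSd,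
    Matrix.mul_one]

lemma nonsing_inv_mul_mul_mul_nonsing_inv {S : Matrix ι ι R} (hS : IsUnit S)
    (X : Matrix ι ι R) : S⁻¹ * (S * X * S) * S⁻¹ = X := by
  have hSd := (isUnit_iff_isUnit_det S).mp hS
  simp only [Matrix.mul_assoc, nonsing_inv_mul_cancel_left _ _ hSd, mul_nonsing_inv _ hSd,
    Matrix.mul_one]

lemma PosDef.mul_mul_transpose [PartialOrder R] [StarRing R] [TrivialStar R]
    {A M : Matrix ι ι R} (hA : A.PosDef) (hM : IsUnit M) : (M * A * Mᵀ).PosDef := by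
  simpa [star_eq_conjTranspose] using (IsUnit.posDef_star_right_conjugate_iff hM).mpr hA

end Matrix

section Msqrt

open scoped MatrixOrder

variable {n : ℕ}

lemma msqrt_eq_cfcSqrt {A : Matrix (Fin n) (Fin n) ℝ} (hA : A.PosSemidef) :
    msqrt A = CFC.sqrt A := by
  rw [CFC.sqrt_eq_real_sqrt A hA.nonneg, cfcₙ_eq_cfc, hA.1.cfc_eq, IsHermitian.cfc,
    Unitary.conjStarAlgAut_apply, msqrt, dif_pos hA]
  rfl

lemma msqrt_mul_msqrt_self {A : Matrix (Fin n) (Fin n) ℝ} (hA : A.PosSemidef) :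
    msqrt A * msqrt A = A := by
  rw [msqrt_eq_cfcSqrt hA]
  exact CFC.sqrt_mul_sqrt_self A hA.nonneg

lemma msqrt_mul_self {A : Matrix (Fin n) (Fin n) ℝ} (hA : A.PosSemidef) :
    msqrt (A * A) = A := by
  rw [msqrt_eq_cfcSqrt (hA.1.isSelfAdjoint.mul_self_nonneg).posSemidef,
    CFC.sqrt_mul_self A hA.nonneg]

lemma posSemidef_msqrt {A : Matrix (Fin n) (Fin n) ℝ} (hA : A.PosSemidef) :
    (msqrt A).PosSemidef := by
  rw [msqrt_eq_cfcSqrt hA]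
  exact (CFC.sqrt_nonneg A).posSemidef

lemma posDef_msqrt {A : Matrix (Fin n) (Fin n) ℝ} (hA : A.PosDef) :
    (msqrt A).PosDef := by
  refine (posSemidef_msqrt hA.posSemidef).posDef_iff_isUnit.mpr
    (isUnit_of_mul_isUnit_left (y := msqrt A) ?_)
  rw [msqrt_mul_msqrt_self hA.posSemidef]
  exact hA.isUnit

lemma transpose_msqrt {A : Matrix (Fin n) (Fin n) ℝ} (hA : A.PosSemidef) :
    (msqrt A)ᵀ = msqrt A :=
  (isHermitian_iff_isSymm.mp (posSemidef_msqrt hA).1).eq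

lemma posDef_msqrt_inv_mul_mul_msqrt_inv {A B : Matrix (Fin n) (Fin n) ℝ} (hA : A.PosDef)
    (hB : B.PosDef) : ((msqrt A)⁻¹ * B * (msqrt A)⁻¹).PosDef := by
  have h := hB.mul_mul_transpose (posDef_msqrt hA).inv.isUnit
  rwa [transpose_nonsing_inv, transpose_msqrt hA.posSemidef] at h

lemma posDef_gmean {A B : Matrix (Fin n) (Fin n) ℝ} (hA : A.PosDef) (hB : B.PosDef) :
    (gmean A B).PosDef := by
  have h := (posDef_msqrt (posDef_msqrt_inv_mul_mul_msqrt_inv hA hB)).mul_mul_transpose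
    (posDef_msqrt hA).isUnit
  rwa [transpose_msqrt hA.posSemidef] at h

lemma gmean_mul_inv_mul_gmean {A B : Matrix (Fin n) (Fin n) ℝ} (hA : A.PosDef)
    (hB : B.PosDef) : gmean A B * A⁻¹ * gmean A B = B := by
  set S := msqrt A
  set T := msqrt (S⁻¹ * B * S⁻¹)
  have hS : IsUnit S := (posDef_msqrt hA).isUnit
  have hA_eq : A = S * 1 * S := by rw [Matrix.mul_one, msqrt_mul_msqrt_self hA.posSemidef]
  have hT : T * T = S⁻¹ * B * S⁻¹ :=
    msqrt_mul_msqrt_self (posDef_msqrt_inv_mul_mul_msqrt_inv hA hB).posSemidef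
  calc gmean A B * A⁻¹ * gmean A B = S * T * S * (S * 1 * S)⁻¹ * (S * T * S) := by
        rw [← hA_eq]; rfl
    _ = S * (T * T) * S := by
        rw [conj_mul_inv_conj_mul_conj hS hS, inv_one, Matrix.mul_one]
    _ = B := by rw [hT, mul_nonsing_inv_mul_mul_nonsing_inv_mul hS]

lemma eq_gmean_of_mul_inv_mul_self {A B X : Matrix (Fin n) (Fin n) ℝ} (hA : A.PosDef)
    (hX : X.PosDef) (hXB : X * A⁻¹ * X = B) : X = gmean A B := by
  set S := msqrt A
  have hS : IsUnit S := (posDef_msqrt hA).isUnit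
  have hSinv : IsUnit S⁻¹ := (posDef_msqrt hA).inv.isUnit
  set Y := S⁻¹ * X * S⁻¹
  have hY : Y.PosSemidef := by
    have h := (hX.mul_mul_transpose hSinv).posSemidef
    rwa [transpose_nonsing_inv, transpose_msqrt hA.posSemidef] at h
  have hA_eq : S⁻¹ * A * S⁻¹ = 1 := by
    simpa [S, msqrt_mul_msqrt_self hA.posSemidef] using nonsing_inv_mul_mul_mul_nonsing_inv hS 1
  have hYY : Y * Y = S⁻¹ * B * S⁻¹ := by
    rw [← hXB, ← conj_mul_inv_conj_mul_conj hSinv hSinv, hA_eq, inv_one, Matrix.mul_one]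
  calc X = S * Y * S := (mul_nonsing_inv_mul_mul_nonsing_inv_mul hS X).symm
    _ = gmean A B := by rw [gmean, ← hYY, msqrt_mul_self hY]

end Msqrt

/-- **Transformation property of the geometric mean.**  For all symmetric positive
definite matrices `A`, `B` and every invertible real matrix `M`,
`M (A # B) Mᵀ = (M A Mᵀ) # (M B Mᵀ)`. -/
theorem statement14 (n : ℕ) (A B M : Matrix (Fin n) (Fin n) ℝ)
    (hA : A.PosDef) (hB : B.PosDef) (hM : IsUnit M) :
    M * gmean A B * Mᵀ = gmean (M * A * Mᵀ) (M * B * Mᵀ) := by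
  have hMT : IsUnit Mᵀ := (isUnit_transpose M).mpr hM
  refine eq_gmean_of_mul_inv_mul_self (hA.mul_mul_transpose hM)
    ((posDef_gmean hA hB).mul_mul_transpose hM) ?_
  rw [conj_mul_inv_conj_mul_conj hM hMT, gmean_mul_inv_mul_gmean hA hB]
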